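/- arXiv:1606.03442 — 2 statements merged into one kernel-verified Lean document; each statement's English description precedes it below -/
import Mathlib

section
/- The orbits of Aut_E on the vertex set of Sp(2ν,2) are exactly the sets O(i,j,k) for nonnegative i+j+k = ν with (i,j,k) ≠ (0,0,ν), where a vector lies in O(i,j,k) iff among its ν consecutive 2-blocks exactly i have weight 2, j have weight 1, and k have weight 0. -/
open Finset

abbrev F2 := ZMod 2

/-- Vectors in `F_2^{2ν}`, divided into `ν` blocks of length 2. -/
abbrev Vec (ν : ℕ) := Fin ν → Fin 2 → F2

/-- The symplectic form `x^T K y` with `K = I_ν ⊗ R`, `R = [[0,1],[1,0]]`. -/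
def sform {ν : ℕ} (x y : Vec ν) : F2 := ∑ l, (x l 0 * y l 1 + x l 1 * y l 0)

/-- The vertex set of the symplectic graph `Sp(2ν,2)`: nonzero vectors.
Vertices `x, y` are adjacent iff `sform x y = 1`. -/
abbrev Vtx (ν : ℕ) := {x : Vec ν // x ≠ 0}

/-- The weight of a length-2 block. -/
def wt (b : Fin 2 → F2) : ℕ := (univ.filter (fun c => b c ≠ 0)).card

/-- The number of blocks of `x` having weight `w`. -/
def nblk {ν : ℕ} (x : Vec ν) (w : ℕ) : ℕ := (univ.filter (fun l => wt (x l) = w)).card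

/-- A permutation of the vertices is an automorphism of `Sp(2ν,2)` iff it
preserves the adjacency relation. -/
def IsAut {ν : ℕ} (σ : Equiv.Perm (Vtx ν)) : Prop :=
  ∀ x y : Vtx ν, sform (σ x).1 (σ y).1 = 1 ↔ sform x.1 y.1 = 1

/-- The standard basis vector `e_{(i,r)}`, in block form. -/
def stdB {ν : ℕ} (p : Fin ν × Fin 2) : Vec ν :=
  fun l c => if l = p.1 ∧ c = p.2 then 1 else 0

/-- The set of standard basis vectors, as vertices. -/
def EVtx (ν : ℕ) : Set (Vtx ν) := {x | ∃ p, x.1 = stdB p}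

/-!
The group `Aut_E` consists of the block maps `x ↦ ((l, c) ↦ x (p l) (t l c))`, which permute the
blocks and swap coordinates inside blocks. Such a map preserves the form block by block, permutes
the standard basis and preserves block weights, and two vectors with the same weight counts are
related by one of them. Conversely, the graph induces on the standard basis the perfect matching
`e (l, 0) ~ e (l, 1)`; an automorphism permuting the basis preserves it, so it acts on indices as a
shear `(l, c) ↦ (p l, t l c)`. As `v` is adjacent to `e q` iff `v` is `1` at the partner of `q`,
the automorphism then acts on every vertex as the corresponding block map.
-/

open Function Equiv

lemma ZMod.two_eq_of_eq_one_iff : ∀ {a b : ZMod 2}, (a = 1 ↔ b = 1) → a = b := by decide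

lemma exists_prodShear_eq_of_injective {α β : Type*} [Finite α] [Finite β] [Nonempty β]
    {f : α × β → α × β} (hf : Injective f) (hblock : ∀ a b b', (f (a, b)).1 = (f (a, b')).1) :
    ∃ (p : Perm α) (t : α → Perm β), ∀ q, f q = prodShear p t q := by
  obtain ⟨b₀⟩ := ‹Nonempty β›
  have hsnd : ∀ a, Injective fun b => (f (a, b)).2 := fun a b b' h =>
    (Prod.ext_iff.mp (hf (Prod.ext (hblock a b b') h))).2
  set t : α → Perm β := fun a => ofBijective _ (Finite.injective_iff_bijective.mp (hsnd a))
  have hfst : Injective fun a => (f (a, b₀)).1 := fun a a' h => by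
    obtain ⟨b, hb⟩ := (t a).surjective (f (a', b₀)).2
    have : f (a, b) = f (a', b₀) := Prod.ext ((hblock a b b₀).trans h) hb
    exact (Prod.ext_iff.mp (hf this)).1
  refine ⟨ofBijective _ (Finite.injective_iff_bijective.mp hfst), t, fun q => ?_⟩
  exact Prod.ext (hblock q.1 q.2 b₀) rfl

section

variable {ν : ℕ}

lemma wt_comp_perm (b : Fin 2 → F2) (τ : Perm (Fin 2)) : wt (b ∘ τ) = wt b :=
  card_equiv τ (by simp)

lemma wt_le_two (b : Fin 2 → F2) : wt b ≤ 2 :=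
  (card_filter_le _ _).trans_eq (by simp)

lemma exists_comp_perm_eq_of_wt_eq :
    ∀ b b' : Fin 2 → F2, wt b = wt b' → ∃ τ : Perm (Fin 2), b ∘ τ = b' := by
  decide

lemma nblk_eq_zero_of_two_lt (x : Vec ν) {w : ℕ} (hw : 2 < w) : nblk x w = 0 :=
  card_eq_zero.mpr (filter_eq_empty_iff.mpr fun l _ => (wt_le_two (x l)).trans_lt hw |>.ne)

lemma forall_nblk_eq_iff (x y : Vec ν) : (∀ w, nblk x w = nblk y w) ↔
    (nblk x 2 = nblk y 2 ∧ nblk x 1 = nblk y 1 ∧ nblk x 0 = nblk y 0) := by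
  refine ⟨fun h => ⟨h 2, h 1, h 0⟩, fun ⟨h2, h1, h0⟩ w => ?_⟩
  match w with
  | 0 => exact h0
  | 1 => exact h1
  | 2 => exact h2
  | w + 3 => rw [nblk_eq_zero_of_two_lt x (by omega), nblk_eq_zero_of_two_lt y (by omega)]

def blockEquiv (p : Perm (Fin ν)) (t : Fin ν → Perm (Fin 2)) : Vec ν ≃ Vec ν where
  toFun x l c := x (p l) (t l c)
  invFun x l c := x (p.symm l) ((t (p.symm l)).symm c)
  left_inv x := by simp
  right_inv x := by simp

@[simp]
lemma blockEquiv_apply (p : Perm (Fin ν)) (t : Fin ν → Perm (Fin 2)) (x : Vec ν) (l : Fin ν)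
    (c : Fin 2) : blockEquiv p t x l c = x (p l) (t l c) := rfl

lemma blockEquiv_zero (p : Perm (Fin ν)) (t : Fin ν → Perm (Fin 2)) : blockEquiv p t 0 = 0 :=
  rfl

lemma sform_blockEquiv (p : Perm (Fin ν)) (t : Fin ν → Perm (Fin 2)) (x y : Vec ν) :
    sform (blockEquiv p t x) (blockEquiv p t y) = sform x y := by
  have hblock : ∀ (τ : Perm (Fin 2)) (a b : Fin 2 → F2),
      a (τ 0) * b (τ 1) + a (τ 1) * b (τ 0) = a 0 * b 1 + a 1 * b 0 := by decide
  simp only [sform, blockEquiv_apply, hblock]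
  exact Equiv.sum_comp p fun l => x l 0 * y l 1 + x l 1 * y l 0

lemma blockEquiv_stdB_prodShear (p : Perm (Fin ν)) (t : Fin ν → Perm (Fin 2))
    (q : Fin ν × Fin 2) : blockEquiv p t (stdB (prodShear p t q)) = stdB q := by
  funext l c
  by_cases hl : l = q.1
  · subst hl
    simp [stdB]
  · simp [stdB, hl, p.injective.ne hl]

lemma nblk_blockEquiv (p : Perm (Fin ν)) (t : Fin ν → Perm (Fin 2)) (x : Vec ν) (w : ℕ) :
    nblk (blockEquiv p t x) w = nblk x w := by
  refine card_equiv p fun l => ?_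
  have : blockEquiv p t x l = x (p l) ∘ t l := rfl
  simp [this, wt_comp_perm]

lemma exists_blockEquiv_eq_of_nblk_eq {x y : Vec ν} (h : ∀ w, nblk x w = nblk y w) :
    ∃ p t, blockEquiv p t x = y := by
  have hfib : ∀ w, {l // wt (y l) = w} ≃ {l // wt (x l) = w} := fun w =>
    Fintype.equivOfCardEq (by simp only [Fintype.card_subtype]; exact (h w).symm)
  set p : Perm (Fin ν) := ofFiberEquiv hfib
  have hp : ∀ l, wt (x (p l)) = wt (y l) := ofFiberEquiv_map hfib
  choose t ht using fun l => exists_comp_perm_eq_of_wt_eq _ _ (hp l)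
  exact ⟨p, t, funext fun l => ht l⟩

def blockVtxPerm (p : Perm (Fin ν)) (t : Fin ν → Perm (Fin 2)) : Perm (Vtx ν) :=
  (blockEquiv p t).subtypeEquiv fun _ =>
    ((blockEquiv p t).injective.ne_iff' (blockEquiv_zero p t)).symm

lemma isAut_blockVtxPerm (p : Perm (Fin ν)) (t : Fin ν → Perm (Fin 2)) :
    IsAut (blockVtxPerm p t) := fun x y => by
  rw [← sform_blockEquiv p t x.1 y.1]
  rfl

lemma sform_stdB_left (q : Fin ν × Fin 2) (v : Vec ν) : sform (stdB q) v = v q.1 q.2.rev := by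
  rw [sform, sum_eq_single q.1 (fun l _ hl => by simp [stdB, hl]) (by simp)]
  obtain ⟨l, c⟩ := q
  fin_cases c <;> simp [stdB]

lemma stdB_apply_eq_one_iff (q : Fin ν × Fin 2) (l : Fin ν) (c : Fin 2) :
    stdB q l c = 1 ↔ (l, c) = q := by
  simp [stdB, Prod.ext_iff]

def stdVtx (q : Fin ν × Fin 2) : Vtx ν :=
  ⟨stdB q, fun h => by simpa [stdB] using congrFun (congrFun h q.1) q.2⟩

lemma stdVtx_injective : Injective (stdVtx (ν := ν)) := fun q r h => by
  simpa [stdVtx, stdB, Prod.ext_iff] using congrFun (congrFun (congrArg Subtype.val h) q.1) q.2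

lemma EVtx_eq_range : EVtx ν = Set.range stdVtx := by
  ext x
  exact ⟨fun ⟨q, hq⟩ => ⟨q, Subtype.ext hq.symm⟩, fun ⟨q, hq⟩ => ⟨q, congrArg Subtype.val hq.symm⟩⟩

lemma image_EVtx_blockVtxPerm (p : Perm (Fin ν)) (t : Fin ν → Perm (Fin 2)) :
    blockVtxPerm p t '' EVtx ν = EVtx ν := by
  have h : blockVtxPerm p t ∘ stdVtx ∘ prodShear p t = stdVtx :=
    funext fun q => Subtype.ext (blockEquiv_stdB_prodShear p t q)
  rw [EVtx_eq_range, ← Set.range_comp, ← (prodShear p t).surjective.range_comp, comp_assoc, h]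

lemma exists_blockEquiv_of_isAut {σ : Perm (Vtx ν)} (hσ : IsAut σ) (hE : σ '' EVtx ν = EVtx ν) :
    ∃ p t, ∀ v : Vtx ν, blockEquiv p t (σ v).1 = v.1 := by
  rw [EVtx_eq_range] at hE
  choose f hf using fun q =>
    (hE.subset ⟨stdVtx q, ⟨q, rfl⟩, rfl⟩ : σ (stdVtx q) ∈ Set.range stdVtx)
  have hinj : Injective f := fun q r h => stdVtx_injective (σ.injective (by rw [← hf, ← hf, h]))
  have hcoord : ∀ q (v : Vtx ν), (σ v).1 (f q).1 (f q).2.rev = v.1 q.1 q.2.rev := fun q v => by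
    have h := hσ (stdVtx q) v
    rw [← hf] at h
    exact ZMod.two_eq_of_eq_one_iff (by simpa only [stdVtx, sform_stdB_left] using h)
  have hpartner : ∀ l c, f (l, c.rev) = ((f (l, c)).1, (f (l, c)).2.rev) := fun l c => by
    have h := hcoord (l, c) (stdVtx (l, c.rev))
    rw [← hf] at h
    simp only [stdVtx] at h
    exact ((stdB_apply_eq_one_iff _ _ _).mp (h.trans (by simp [stdB]))).symm
  have hblock : ∀ l c d, (f (l, c)).1 = (f (l, d)).1 := fun l c d => by
    obtain rfl | rfl : d = c ∨ d = c.rev := by revert c d; decide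
    · rfl
    · rw [hpartner]
  obtain ⟨p, t, hpt⟩ := exists_prodShear_eq_of_injective hinj hblock
  refine ⟨p, t, fun v => funext₂ fun l c => ?_⟩
  have h := hcoord (l, c.rev) v
  rw [hpartner] at h
  simpa [hpt] using h

end

theorem autE_orbits_general (ν : ℕ) (x y : Vtx ν) :
    (∃ σ : Equiv.Perm (Vtx ν), IsAut σ ∧ ⇑σ '' EVtx ν = EVtx ν ∧ σ x = y) ↔
    (nblk x.1 2 = nblk y.1 2 ∧ nblk x.1 1 = nblk y.1 1 ∧ nblk x.1 0 = nblk y.1 0) := by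
  rw [← forall_nblk_eq_iff]
  constructor
  · rintro ⟨σ, hσ, hE, rfl⟩ w
    obtain ⟨p, t, hpt⟩ := exists_blockEquiv_of_isAut hσ hE
    rw [← hpt x, nblk_blockEquiv]
  · intro h
    obtain ⟨p, t, hpt⟩ := exists_blockEquiv_eq_of_nblk_eq h
    exact ⟨blockVtxPerm p t, isAut_blockVtxPerm p t, image_EVtx_blockVtxPerm p t, Subtype.ext hpt⟩

/-- The orbits of `Aut_E` (automorphisms fixing the set of standard basis vectors
setwise) on the vertices of `Sp(2ν,2)` are exactly the sets `O(i,j,k)`: two vertices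
are in the same orbit iff they have the same numbers of blocks of weight 2, 1 and 0. -/
theorem autE_orbits (ν : ℕ) (hν : 1 ≤ ν) (x y : Vtx ν) :
    (∃ σ : Equiv.Perm (Vtx ν), IsAut σ ∧ ⇑σ '' EVtx ν = EVtx ν ∧ σ x = y) ↔
    (nblk x.1 2 = nblk y.1 2 ∧ nblk x.1 1 = nblk y.1 1 ∧ nblk x.1 0 = nblk y.1 0) :=
  autE_orbits_general ν x y
end

section
/- The orbits of Aut(X)_S on the vertices of X = Sp(2ν,2) are exactly S, T, S_0 \ (S ∪ T), S_2, and S_4. -/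
/-!
Everything rests on the nondegeneracy of the symplectic form. An adjacency-preserving bijection
of the nonzero vectors is additive, so an automorphism fixing `S` setwise permutes `S`, keeps the
number of neighbours in `S`, and maps `T`, the set of sums of two elements of `S`, to itself.

Conversely, symplectic transvections `z ↦ z + (zᵀK u) u` are automorphisms. Products of two of
them realise every transposition of `S`, hence every permutation of `S`, which makes `S` and `T`
orbits. A Witt-type argument, again with at most two transvections, maps any vector outside the
span of `S` to any other one with the same neighbours in `S` while fixing `S` pointwise; after a
permutation of `S` any two vectors outside the span with equally many neighbours in `S` have the
same neighbours there. The nonzero vectors of the span are `S ∪ T`, and vertices of `S_2`, `S_4`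
lie outside it.
-/

open Finset

/-- `x` belongs to the 4-subset `S = {v_1,v_2,v_3,v_4}`. -/
def inS {ν : ℕ} (v : Fin 4 → Vec ν) (x : Vec ν) : Prop := ∃ i, x = v i

/-- `x` belongs to `T = {v_1+v_2, v_2+v_3, v_3+v_1}`. -/
def inT {ν : ℕ} (v : Fin 4 → Vec ν) (x : Vec ν) : Prop :=
  ∃ i j : Fin 4, i ≠ 3 ∧ j ≠ 3 ∧ i ≠ j ∧ x = v i + v j

/-- The number of indices `j ∈ [4]` with `x^T K v_j = 1`. -/
def cnt {ν : ℕ} (v : Fin 4 → Vec ν) (x : Vec ν) : ℕ :=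
  (univ.filter (fun j : Fin 4 => sform x (v j) = 1)).card

instance {ν : ℕ} (v : Fin 4 → Vec ν) : DecidablePred (inS v) := fun _ =>
  inferInstanceAs (Decidable (∃ _, _))

instance {ν : ℕ} (v : Fin 4 → Vec ν) : DecidablePred (inT v) := fun _ =>
  inferInstanceAs (Decidable (∃ _, _))

/-- The set `S` as a finset of vertices. -/
def Sfin {ν : ℕ} (v : Fin 4 → Vec ν) : Finset (Vtx ν) := univ.filter (fun x => inS v x.1)

/-- The set `T` as a finset of vertices. -/
def Tfin {ν : ℕ} (v : Fin 4 → Vec ν) : Finset (Vtx ν) := univ.filter (fun x => inT v x.1)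

/-- The set `S_i` of vertices `x` with `#{j : x^T K v_j = 1} = i`, as a finset. -/
def Sifin {ν : ℕ} (v : Fin 4 → Vec ν) (i : ℕ) : Finset (Vtx ν) :=
  univ.filter (fun x => cnt v x.1 = i)

/-- The set `S_0 \ (S ∪ T)` as a finset of vertices. -/
def S0'fin {ν : ℕ} (v : Fin 4 → Vec ν) : Finset (Vtx ν) :=
  univ.filter (fun x => cnt v x.1 = 0 ∧ ¬ inS v x.1 ∧ ¬ inT v x.1)

/-- The number of neighbors of the vertex `x` inside the finset `C`. -/
def nbc {ν : ℕ} (x : Vtx ν) (C : Finset (Vtx ν)) : ℕ :=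
  (C.filter (fun y => sform x.1 y.1 = 1)).card

/-- The standing hypotheses on the special 4-subset `S = {v_1,v_2,v_3,v_4}`:
all `v_i` are vertices, `v_1,v_2,v_3` are linearly independent and pairwise
(and self) `K`-orthogonal, and `v_4 = v_1 + v_2 + v_3`. -/
structure SConfig (ν : ℕ) (v : Fin 4 → Vec ν) : Prop where
  hne : ∀ i, v i ≠ 0
  hind : LinearIndependent F2 ![v 0, v 1, v 2]
  horth : ∀ i j : Fin 4, i ≠ 3 → j ≠ 3 → sform (v i) (v j) = 0
  hsum : v 3 = v 0 + v 1 + v 2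

lemma F2.eq_zero_or_eq_one (a : F2) : a = 0 ∨ a = 1 := by
  revert a; decide

lemma F2.eq_one_of_ne_zero {a : F2} (h : a ≠ 0) : a = 1 :=
  (F2.eq_zero_or_eq_one a).resolve_left h

lemma F2.eq_of_eq_one_iff {a b : F2} (h : a = 1 ↔ b = 1) : a = b := by
  revert a b; decide

lemma F2.add_self_eq_zero {V : Type*} [AddCommGroup V] [Module F2 V] (w : V) : w + w = 0 := by
  rw [← two_smul F2 w, show (2 : F2) = 0 from rfl, zero_smul]

lemma F2.eq_of_add_eq_zero {V : Type*} [AddCommGroup V] [Module F2 V] {p q : V}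
    (h : p + q = 0) : p = q :=
  (add_eq_zero_iff_eq_neg.1 h).trans (neg_eq_of_add_eq_zero_left (F2.add_self_eq_zero q))

namespace LinearMap.BilinForm

variable {V : Type*} [AddCommGroup V] [Module F2 V] {B : LinearMap.BilinForm F2 V}

lemma IsAlt.apply_comm (hB : B.IsAlt) (x y : V) : B x y = B y x := by
  rw [← LinearMap.IsAlt.neg hB, ZMod.neg_eq_self_mod_two]

abbrev symplecticTransvection (hB : B.IsAlt) (u : V) : V ≃ₗ[F2] V :=
  LinearEquiv.transvection (f := B.flip u) (v := u) (hB u)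

lemma _root_.LinearMap.IsOrthogonal.comp {f g : V → V} (hf : B.IsOrthogonal f)
    (hg : B.IsOrthogonal g) : B.IsOrthogonal (g ∘ f) :=
  fun x y => (hg (f x) (f y)).trans (hf x y)

section Transvection

variable (hB : B.IsAlt) {u w z : V}
include hB

lemma symplecticTransvection_apply (u z : V) :
    symplecticTransvection hB u z = z + B z u • u := rfl

lemma isOrthogonal_symplecticTransvection (u : V) :
    B.IsOrthogonal (symplecticTransvection hB u) := by
  intro x y
  simp only [symplecticTransvection_apply, map_add, map_smul, LinearMap.add_apply,
    LinearMap.smul_apply, smul_eq_mul, hB u]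
  rw [hB.apply_comm u y]
  ring_nf
  rw [show (2 : F2) = 0 from rfl]
  ring

lemma symplecticTransvection_apply_of_eq_zero (h : B z u = 0) :
    symplecticTransvection hB u z = z := by
  rw [symplecticTransvection_apply, h, zero_smul, add_zero]

lemma symplecticTransvection_apply_of_eq_one (h : B z u = 1) :
    symplecticTransvection hB u z = z + u := by
  rw [symplecticTransvection_apply, h, one_smul]

lemma symplecticTransvection_trans_apply_of_eq_zero (hzu : B z u = 0) (hzw : B z w = 0) :
    ((symplecticTransvection hB w).trans (symplecticTransvection hB (u + w))) z = z := by
  rw [LinearEquiv.trans_apply, symplecticTransvection_apply_of_eq_zero hB hzw,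
    symplecticTransvection_apply_of_eq_zero hB (by rw [map_add, hzu, hzw, add_zero])]

lemma symplecticTransvection_trans_apply_of_eq_one (huw : B u w = 0) (hzu : B z u = 0)
    (hzw : B z w = 1) :
    ((symplecticTransvection hB w).trans (symplecticTransvection hB (u + w))) z = z + u := by
  have h : B (z + w) (u + w) = 1 := by
    simp only [map_add, LinearMap.add_apply, hzu, hzw, hB w, hB.apply_comm w u, huw]
    rfl
  rw [LinearEquiv.trans_apply, symplecticTransvection_apply_of_eq_one hB hzw,
    symplecticTransvection_apply_of_eq_one hB h, add_add_add_comm, F2.add_self_eq_zero,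
    add_zero]

end Transvection

section Nondegenerate

variable [FiniteDimensional F2 V] (hnd : B.Nondegenerate)
include hnd

lemma exists_forall_apply_eq_dual (f : Module.Dual F2 V) : ∃ w, ∀ z, B z w = f z :=
  ⟨(B.flip.toDual hnd.flip).symm f, fun z => by
    rw [← flip_apply, ← toDual_def hnd.flip, LinearEquiv.apply_symm_apply]⟩

lemma exists_eq_zero_on_and_eq_one {W : Submodule F2 V} {x : V} (hx : x ∉ W) :
    ∃ w, (∀ z ∈ W, B z w = 0) ∧ B x w = 1 := by
  obtain ⟨f, hfx, hfW⟩ := Submodule.exists_dual_map_eq_bot_of_notMem hx inferInstance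
  obtain ⟨w, hw⟩ := exists_forall_apply_eq_dual hnd f
  refine ⟨w, fun z hz => ?_, by rw [hw]; exact F2.eq_one_of_ne_zero hfx⟩
  rw [hw, ← Submodule.mem_bot F2, ← hfW]
  exact Submodule.mem_map_of_mem hz

lemma exists_apply_eq_of_linearIndependent {ι : Type*} {e : ι → V} (he : LinearIndependent F2 e)
    (ε : ι → F2) :
    ∃ w, ∀ i, B (e i) w = ε i := by
  obtain ⟨f, hf⟩ := LinearMap.exists_extend ((Module.Basis.span he).constr F2 ε)
  obtain ⟨w, hw⟩ := exists_forall_apply_eq_dual hnd f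
  refine ⟨w, fun i => ?_⟩
  have := LinearMap.congr_fun hf (Module.Basis.span he i)
  rw [LinearMap.comp_apply, Module.Basis.constr_basis, Module.Basis.span_apply] at this
  rw [hw, ← this]
  rfl

/-- Witt's extension theorem in the simplest case: the identity on `W` extends to an isometry
sending `x` to `y`. -/
lemma exists_isOrthogonal_eq_on_and_apply_eq (hB : B.IsAlt) {W : Submodule F2 V} {x y : V}
    (hx : x ∉ W) (hy : y ∉ W) (hxy : ∀ z ∈ W, B z x = B z y) :
    ∃ g : V ≃ₗ[F2] V, B.IsOrthogonal g ∧ (∀ z ∈ W, g z = z) ∧ g x = y := by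
  have hW : ∀ z ∈ W, B z (x + y) = 0 := fun z hz => by
    rw [map_add, hxy z hz, F2.add_self_eq_zero]
  have hxu : B x (x + y) = B x y := by rw [map_add, hB x, zero_add]
  have hyu : x + (x + y) = y := by rw [← add_assoc, F2.add_self_eq_zero, zero_add]
  rcases F2.eq_zero_or_eq_one (B x y) with h0 | h1
  · -- `x ⊥ y`: the transvection by `w` moves `x` to `x + w`, which is adjacent to `y`.
    have hx' : x ∉ Submodule.span F2 (insert (x + y) W) := by
      intro hmem
      obtain ⟨a, ha⟩ := Submodule.mem_span_insert'.1 hmem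
      rw [Submodule.span_eq] at ha
      rcases F2.eq_zero_or_eq_one a with rfl | rfl
      · exact hx (by simpa using ha)
      · exact hy (by rwa [one_smul, hyu] at ha)
    obtain ⟨w, hw, hxw⟩ := exists_eq_zero_on_and_eq_one hnd hx'
    have hwu : B (x + y) w = 0 := hw _ (Submodule.subset_span (Set.mem_insert _ _))
    refine ⟨(symplecticTransvection hB w).trans (symplecticTransvection hB (x + y + w)),
      (isOrthogonal_symplecticTransvection hB _).comp (isOrthogonal_symplecticTransvection hB _),
      fun z hz => symplecticTransvection_trans_apply_of_eq_zero hB (hW z hz)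
        (hw z (Submodule.subset_span (Set.mem_insert_of_mem _ hz))), ?_⟩
    rw [symplecticTransvection_trans_apply_of_eq_one hB hwu (hxu.trans h0) hxw, hyu]
  · refine ⟨symplecticTransvection hB (x + y), isOrthogonal_symplecticTransvection hB _,
      fun z hz => symplecticTransvection_apply_of_eq_zero hB (hW z hz), ?_⟩
    rw [symplecticTransvection_apply_of_eq_one hB (hxu.trans h1), hyu]

end Nondegenerate

end LinearMap.BilinForm

section SymplecticForm

variable {ν : ℕ}

lemma sform_add_left (x y z : Vec ν) : sform (x + y) z = sform x z + sform y z := by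
  simp only [sform, Pi.add_apply, ← Finset.sum_add_distrib]
  exact Finset.sum_congr rfl fun _ _ => by ring

lemma sform_smul_left (a : F2) (x y : Vec ν) : sform (a • x) y = a • sform x y := by
  simp only [sform, Pi.smul_apply, smul_eq_mul, Finset.mul_sum]
  exact Finset.sum_congr rfl fun _ _ => by ring

lemma sform_add_right (x y z : Vec ν) : sform x (y + z) = sform x y + sform x z := by
  simp only [sform, Pi.add_apply, ← Finset.sum_add_distrib]
  exact Finset.sum_congr rfl fun _ _ => by ring

lemma sform_smul_right (a : F2) (x y : Vec ν) : sform x (a • y) = a • sform x y := by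
  simp only [sform, Pi.smul_apply, smul_eq_mul, Finset.mul_sum]
  exact Finset.sum_congr rfl fun _ _ => by ring

variable (ν) in
def symplecticForm : LinearMap.BilinForm F2 (Vec ν) :=
  LinearMap.mk₂ F2 sform sform_add_left sform_smul_left sform_add_right sform_smul_right

@[simp]
lemma symplecticForm_apply (x y : Vec ν) : symplecticForm ν x y = sform x y := rfl

lemma symplecticForm_isAlt : (symplecticForm ν).IsAlt := fun x => by
  simp only [symplecticForm_apply, sform]
  exact Finset.sum_eq_zero fun _ _ => by rw [mul_comm]; exact CharTwo.add_self_eq_zero _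

lemma sform_comm (x y : Vec ν) : sform x y = sform y x :=
  symplecticForm_isAlt.apply_comm x y

lemma symplecticForm_nondegenerate : (symplecticForm ν).Nondegenerate := by
  refine symplecticForm_isAlt.isRefl.nondegenerate_iff_separatingLeft.2 fun x hx => ?_
  funext l c
  have h := hx (Pi.single l (Pi.single (1 - c) 1))
  rw [symplecticForm_apply, sform,
    Finset.sum_eq_single l (fun _ _ hl => by simp [hl]) (by simp)] at h
  fin_cases c <;> simpa using h

end SymplecticForm

namespace SConfig

/-- Coordinates of `v 0, …, v 3` in the basis `v 0, v 1, v 2` of the span of `S`: facts about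
`S` and its span become decidable facts about these coordinates. -/
def coords : Fin 4 → Fin 3 → F2 := ![![1, 0, 0], ![0, 1, 0], ![0, 0, 1], ![1, 1, 1]]

variable {ν : ℕ} {v : Fin 4 → Vec ν} (hv : SConfig ν v)
include hv

lemma apply_eq_linearCombination (k : Fin 4) :
    v k = Fintype.linearCombination F2 ![v 0, v 1, v 2] (coords k) := by
  fin_cases k <;> simp [Fintype.linearCombination_apply, Fin.sum_univ_three, coords, hv.hsum]

lemma injective : Function.Injective v := by
  intro i j h
  rw [hv.apply_eq_linearCombination i, hv.apply_eq_linearCombination j] at h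
  exact (by decide : Function.Injective coords) (hv.hind.fintypeLinearCombination_injective h)

lemma inT_add {a b : Fin 4} (hab : a ≠ b) : inT v (v a + v b) := by
  obtain ⟨i, j, hi, hj, hij, h⟩ : ∃ i j : Fin 4, i ≠ 3 ∧ j ≠ 3 ∧ i ≠ j ∧
      coords a + coords b = coords i + coords j := by
    revert a b; decide
  refine ⟨i, j, hi, hj, hij, ?_⟩
  rw [hv.apply_eq_linearCombination a, hv.apply_eq_linearCombination b,
    hv.apply_eq_linearCombination i, hv.apply_eq_linearCombination j, ← map_add, ← map_add, h]

lemma inT_iff_exists_add {z : Vec ν} : inT v z ↔ ∃ i j, i ≠ j ∧ z = v i + v j :=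
  ⟨fun ⟨i, j, _, _, hij, h⟩ => ⟨i, j, hij, h⟩, fun ⟨_, _, hij, h⟩ => h ▸ hv.inT_add hij⟩

lemma inS_or_inT_of_mem_span {z : Vec ν} (hz : z ∈ Submodule.span F2 (Set.range v))
    (hz0 : z ≠ 0) : inS v z ∨ inT v z := by
  have hspan : Submodule.span F2 (Set.range v) ≤
      LinearMap.range (Fintype.linearCombination F2 ![v 0, v 1, v 2]) :=
    Submodule.span_le.2 (Set.range_subset_iff.2 fun k =>
      ⟨coords k, (hv.apply_eq_linearCombination k).symm⟩)
  have key : ∀ d : Fin 3 → F2, d ≠ 0 → (∃ k, d = coords k) ∨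
      ∃ i j : Fin 4, i ≠ 3 ∧ j ≠ 3 ∧ i ≠ j ∧ d = coords i + coords j := by decide
  obtain ⟨d, rfl⟩ := hspan hz
  obtain ⟨k, rfl⟩ | ⟨i, j, hi, hj, hij, rfl⟩ := key d (by rintro rfl; exact hz0 (map_zero _))
  · exact Or.inl ⟨k, (hv.apply_eq_linearCombination k).symm⟩
  · refine Or.inr ⟨i, j, hi, hj, hij, ?_⟩
    rw [map_add, ← hv.apply_eq_linearCombination i, ← hv.apply_eq_linearCombination j]

lemma sform_apply_three (z : Vec ν) :
    sform z (v 3) = sform z (v 0) + sform z (v 1) + sform z (v 2) := by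
  rw [hv.hsum, sform_add_right, sform_add_right]

lemma sform_eq_zero (i j : Fin 4) : sform (v i) (v j) = 0 := by
  have hj3 : ∀ i j : Fin 4, j ≠ 3 → sform (v i) (v j) = 0 := fun i j hj => by
    by_cases hi : i = 3
    · rw [hi, hv.hsum, sform_add_left, sform_add_left, hv.horth 0 j (by decide) hj,
        hv.horth 1 j (by decide) hj, hv.horth 2 j (by decide) hj, add_zero, add_zero]
    · exact hv.horth i j hi hj
  by_cases hj : j = 3
  · rw [hj, hv.sform_apply_three, hj3 i 0 (by decide), hj3 i 1 (by decide),
      hj3 i 2 (by decide), add_zero, add_zero]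
  · exact hj3 i j hj

lemma sform_eq_zero_of_mem_span {z : Vec ν} (hz : z ∈ Submodule.span F2 (Set.range v))
    (j : Fin 4) : sform z (v j) = 0 :=
  (Submodule.span_le (p := LinearMap.ker ((symplecticForm ν).flip (v j))).2
    (Set.range_subset_iff.2 fun i => hv.sform_eq_zero i j)) hz

lemma cnt_eq_zero_or_two_or_four (z : Vec ν) : cnt v z = 0 ∨ cnt v z = 2 ∨ cnt v z = 4 := by
  have key : ∀ p : Fin 4 → F2, p 3 = p 0 + p 1 + p 2 →
      #{j | p j = 1} = 0 ∨ #{j | p j = 1} = 2 ∨ #{j | p j = 1} = 4 := by decide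
  exact key (fun j => sform z (v j)) (hv.sform_apply_three z)

end SConfig

namespace IsAut

variable {ν : ℕ} {σ : Equiv.Perm (Vtx ν)} (hσ : IsAut σ)
include hσ

lemma sform_eq (a b : Vtx ν) : sform (σ a).1 (σ b).1 = sform a.1 b.1 :=
  F2.eq_of_eq_one_iff (hσ a b)

lemma symm : IsAut σ.symm := fun a b => by
  rw [← hσ, Equiv.apply_symm_apply, Equiv.apply_symm_apply]

/-- The defect `σ (a + b) + σ a + σ b` is orthogonal to every `σ w`, hence zero. -/
lemma map_add (a b : Vtx ν) (h : a.1 + b.1 ≠ 0) :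
    (σ ⟨a.1 + b.1, h⟩).1 = (σ a).1 + (σ b).1 := by
  refine F2.eq_of_add_eq_zero (symplecticForm_nondegenerate.1 _ fun w => ?_)
  by_cases hw : w = 0
  · rw [hw, map_zero]
  obtain ⟨w', rfl⟩ : ∃ w', (σ w').1 = w := ⟨σ.symm ⟨w, hw⟩, by simp⟩
  rw [symplecticForm_apply, sform_add_left, sform_add_left, hσ.sform_eq, hσ.sform_eq,
    hσ.sform_eq, sform_add_left]
  exact F2.add_self_eq_zero _

end IsAut

section Stabilizer

variable {ν : ℕ} {v : Fin 4 → Vec ν} {σ : Equiv.Perm (Vtx ν)}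

lemma inS_apply_iff (hS : ⇑σ '' {z : Vtx ν | inS v z.1} = {z | inS v z.1}) (z : Vtx ν) :
    inS v (σ z).1 ↔ inS v z.1 := by
  change σ z ∈ {z : Vtx ν | inS v z.1} ↔ z ∈ {z : Vtx ν | inS v z.1}
  conv_lhs => rw [← hS]
  exact σ.injective.mem_set_image

lemma image_symm_eq_of_image_eq {A : Set (Vtx ν)} (hA : ⇑σ '' A = A) : ⇑σ.symm '' A = A := by
  conv_lhs => rw [← hA]
  exact σ.symm_image_image A

lemma exists_perm_apply_eq (hv : SConfig ν v)
    (hS : ⇑σ '' {z : Vtx ν | inS v z.1} = {z | inS v z.1}) :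
    ∃ τ : Equiv.Perm (Fin 4), ∀ i, (σ ⟨v i, hv.hne i⟩).1 = v (τ i) := by
  choose τ hτ using fun i => (inS_apply_iff hS ⟨v i, hv.hne i⟩).2 ⟨i, rfl⟩
  have hinj : Function.Injective τ := fun i j h => by
    have : σ ⟨v i, hv.hne i⟩ = σ ⟨v j, hv.hne j⟩ := Subtype.ext (by rw [hτ i, hτ j, h])
    exact hv.injective (congrArg Subtype.val (σ.injective this))
  exact ⟨Equiv.ofBijective τ (Finite.injective_iff_bijective.1 hinj), hτ⟩

lemma cnt_apply (hv : SConfig ν v) (hσ : IsAut σ)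
    (hS : ⇑σ '' {z : Vtx ν | inS v z.1} = {z | inS v z.1}) (z : Vtx ν) :
    cnt v (σ z).1 = cnt v z.1 := by
  obtain ⟨τ, hτ⟩ := exists_perm_apply_eq hv hS
  simp only [cnt, ← Fintype.card_subtype]
  exact (Fintype.card_congr (τ.subtypeEquiv fun i => by rw [← hτ, hσ.sform_eq])).symm

lemma inT_apply (hv : SConfig ν v) (hσ : IsAut σ)
    (hS : ⇑σ '' {z : Vtx ν | inS v z.1} = {z | inS v z.1}) {z : Vtx ν} (h : inT v z.1) :
    inT v (σ z).1 := by
  obtain ⟨τ, hτ⟩ := exists_perm_apply_eq hv hS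
  obtain ⟨z, hz0⟩ := z
  obtain ⟨i, j, hij, rfl⟩ := hv.inT_iff_exists_add.1 h
  have hadd : (σ ⟨v i + v j, hz0⟩).1 = v (τ i) + v (τ j) := by
    rw [← hτ, ← hτ]
    exact hσ.map_add ⟨v i, hv.hne i⟩ ⟨v j, hv.hne j⟩ hz0
  rw [hadd]
  exact hv.inT_add (τ.injective.ne hij)

lemma inT_apply_iff (hv : SConfig ν v) (hσ : IsAut σ)
    (hS : ⇑σ '' {z : Vtx ν | inS v z.1} = {z | inS v z.1}) (z : Vtx ν) :
    inT v (σ z).1 ↔ inT v z.1 :=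
  ⟨fun h => by simpa using inT_apply hv hσ.symm (image_symm_eq_of_image_eq hS) h,
    inT_apply hv hσ hS⟩

end Stabilizer

section Isometries

variable {ν : ℕ} {v : Fin 4 → Vec ν}

def vtxPerm (g : Vec ν ≃ₗ[F2] Vec ν) : Equiv.Perm (Vtx ν) :=
  g.toEquiv.subtypeEquiv fun _ => g.map_ne_zero_iff.symm

lemma isAut_vtxPerm {g : Vec ν ≃ₗ[F2] Vec ν} (hg : (symplecticForm ν).IsOrthogonal g) :
    IsAut (vtxPerm g) := fun a b => by
  rw [show sform (vtxPerm g a).1 (vtxPerm g b).1 = sform a.1 b.1 from hg a.1 b.1]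

lemma image_vtxPerm {g : Vec ν ≃ₗ[F2] Vec ν} {π : Equiv.Perm (Fin 4)}
    (hg : ∀ k, g (v k) = v (π k)) :
    ⇑(vtxPerm g) '' {z : Vtx ν | inS v z.1} = {z | inS v z.1} := by
  ext z
  constructor
  · rintro ⟨z, ⟨k, hk⟩, rfl⟩
    exact ⟨π k, by rw [← hg k, ← hk]; rfl⟩
  · rintro ⟨k, hk⟩
    refine ⟨(vtxPerm g).symm z, ⟨π.symm k, ?_⟩, by simp⟩
    change g.symm z.1 = _
    rw [LinearEquiv.symm_apply_eq, hg, Equiv.apply_symm_apply, hk]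

def IsometryRel (v : Fin 4 → Vec ν) (x y : Vec ν) : Prop :=
  ∃ g : Vec ν ≃ₗ[F2] Vec ν, (symplecticForm ν).IsOrthogonal g ∧
    (∃ π : Equiv.Perm (Fin 4), ∀ k, g (v k) = v (π k)) ∧ g x = y

lemma IsometryRel.trans {x y z : Vec ν} (hxy : IsometryRel v x y) (hyz : IsometryRel v y z) :
    IsometryRel v x z := by
  obtain ⟨g, hg, ⟨π, hπ⟩, rfl⟩ := hxy
  obtain ⟨g', hg', ⟨π', hπ'⟩, rfl⟩ := hyz
  exact ⟨g.trans g', hg.comp hg', ⟨π.trans π', fun k => by simp [hπ, hπ']⟩, rfl⟩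

lemma IsometryRel.exists_isAut {x y : Vtx ν} (h : IsometryRel v x.1 y.1) :
    ∃ σ : Equiv.Perm (Vtx ν), IsAut σ ∧
      ⇑σ '' {z : Vtx ν | inS v z.1} = {z | inS v z.1} ∧ σ x = y := by
  obtain ⟨g, hg, ⟨π, hπ⟩, hxy⟩ := h
  exact ⟨vtxPerm g, isAut_vtxPerm hg, image_vtxPerm hπ, Subtype.ext hxy⟩

lemma mem_span_iff_of_apply_eq {g : Vec ν ≃ₗ[F2] Vec ν} {π : Equiv.Perm (Fin 4)}
    (hg : ∀ k, g (v k) = v (π k)) {x : Vec ν} :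
    g x ∈ Submodule.span F2 (Set.range v) ↔ x ∈ Submodule.span F2 (Set.range v) := by
  have hmap : (Submodule.span F2 (Set.range v)).map (g : Vec ν →ₗ[F2] Vec ν) =
      Submodule.span F2 (Set.range v) := by
    rw [Submodule.map_span, ← Set.range_comp,
      show ⇑(g : Vec ν →ₗ[F2] Vec ν) ∘ v = v ∘ π from funext hg, π.surjective.range_comp]
  conv_lhs => rw [← hmap]
  rw [Submodule.mem_map_equiv, LinearEquiv.symm_apply_apply]

end Isometries

namespace SConfig

variable {ν : ℕ} {v : Fin 4 → Vec ν} (hv : SConfig ν v)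
include hv

lemma exists_sform_eq (ε : Fin 4 → F2) (hε : ε 3 = ε 0 + ε 1 + ε 2) :
    ∃ w, ∀ k, sform (v k) w = ε k := by
  obtain ⟨w, hw⟩ := LinearMap.BilinForm.exists_apply_eq_of_linearIndependent
    symplecticForm_nondegenerate hv.hind ![ε 0, ε 1, ε 2]
  have h0 : sform (v 0) w = ε 0 := hw 0
  have h1 : sform (v 1) w = ε 1 := hw 1
  have h2 : sform (v 2) w = ε 2 := hw 2
  refine ⟨w, fun k => ?_⟩
  fin_cases k
  · exact h0
  · exact h1
  · exact h2
  · change sform (v 3) w = ε 3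
    rw [hv.hsum, sform_add_left, sform_add_left, h0, h1, h2, hε]

open LinearMap.BilinForm in
lemma exists_isOrthogonal_swap {a b : Fin 4} (hab : a ≠ b) :
    ∃ g : Vec ν ≃ₗ[F2] Vec ν, (symplecticForm ν).IsOrthogonal g ∧
      ∀ k, g (v k) = v (Equiv.swap a b k) := by
  obtain ⟨w, hw⟩ := hv.exists_sform_eq (fun k => if k = a ∨ k = b then 1 else 0)
    (by revert a b; decide)
  have hB := symplecticForm_isAlt (ν := ν)
  have hwa : sform (v a) w = 1 := by simp [hw]
  have hwb : sform (v b) w = 1 := by simp [hw]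
  have huw : sform (v a + v b) w = 0 := by rw [sform_add_left, hwa, hwb]; rfl
  refine ⟨(symplecticTransvection hB w).trans (symplecticTransvection hB (v a + v b + w)),
    (isOrthogonal_symplecticTransvection hB _).comp (isOrthogonal_symplecticTransvection hB _),
    fun k => ?_⟩
  have hku : sform (v k) (v a + v b) = 0 := by
    rw [sform_add_right, hv.sform_eq_zero, hv.sform_eq_zero, add_zero]
  by_cases hka : k = a
  · rw [hka, Equiv.swap_apply_left, symplecticTransvection_trans_apply_of_eq_one hB huw
      (hka ▸ hku) hwa, ← add_assoc, F2.add_self_eq_zero, zero_add]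
  by_cases hkb : k = b
  · rw [hkb, Equiv.swap_apply_right, symplecticTransvection_trans_apply_of_eq_one hB huw
      (hkb ▸ hku) hwb, add_comm (v a), ← add_assoc, F2.add_self_eq_zero, zero_add]
  · rw [Equiv.swap_apply_of_ne_of_ne hka hkb,
      symplecticTransvection_trans_apply_of_eq_zero hB hku (by simp [hw, hka, hkb])]

lemma exists_isOrthogonal_perm (π : Equiv.Perm (Fin 4)) :
    ∃ g : Vec ν ≃ₗ[F2] Vec ν, (symplecticForm ν).IsOrthogonal g ∧ ∀ k, g (v k) = v (π k) := by
  induction π using Equiv.Perm.swap_induction_on with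
  | one => exact ⟨LinearEquiv.refl F2 _, fun _ _ => rfl, fun _ => rfl⟩
  | swap_mul f a b hab ih =>
    obtain ⟨g, hg, hgv⟩ := ih
    obtain ⟨s, hs, hsv⟩ := hv.exists_isOrthogonal_swap hab
    exact ⟨g.trans s, hg.comp hs, fun k => by simp [hgv, hsv]⟩

lemma isometryRel_sum {s t : Finset (Fin 4)} (h : #s = #t) :
    IsometryRel v (∑ m ∈ s, v m) (∑ m ∈ t, v m) := by
  obtain ⟨π, hπ⟩ := Equiv.Perm.exists_map_finset_eq s t h
  obtain ⟨g, hg, hgv⟩ := hv.exists_isOrthogonal_perm π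
  refine ⟨g, hg, ⟨π, hgv⟩, ?_⟩
  rw [map_sum, ← hπ, Finset.sum_map]
  simp [hgv]

lemma notMem_span_of_cnt_ne_zero {z : Vec ν} (h : cnt v z ≠ 0) :
    z ∉ Submodule.span F2 (Set.range v) := fun hz =>
  h (Finset.card_eq_zero.2 (Finset.filter_eq_empty_iff.2 fun j _ => by
    rw [hv.sform_eq_zero_of_mem_span hz j]; decide))

lemma isometryRel_of_notMem_span {x y : Vec ν} (hx : x ∉ Submodule.span F2 (Set.range v))
    (hy : y ∉ Submodule.span F2 (Set.range v)) (h : cnt v x = cnt v y) : IsometryRel v x y := by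
  -- After permuting `S`, `g x` has the same neighbours in `S` as `y`; then apply Witt's lemma
  -- with `W` the span of `S`.
  obtain ⟨π, hπ⟩ := Equiv.Perm.exists_map_finset_eq _ _ h
  obtain ⟨g, hg, hgv⟩ := hv.exists_isOrthogonal_perm π
  have hpat : ∀ m, sform (g x) (v m) = sform y (v m) := fun m => by
    have hxm : sform (g x) (v m) = sform x (v (π.symm m)) := by
      have := hg x (v (π.symm m))
      rwa [hgv, Equiv.apply_symm_apply] at this
    rw [hxm]
    refine F2.eq_of_eq_one_iff ?_
    simpa [Finset.mem_map_equiv] using congrArg (m ∈ ·) hπ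
  have hW : ∀ z ∈ Submodule.span F2 (Set.range v), sform z (g x + y) = 0 := fun z hz =>
    (Submodule.span_le (p := LinearMap.ker ((symplecticForm ν).flip (g x + y)))).2
      (Set.range_subset_iff.2 fun m => by
        change sform (v m) (g x + y) = 0
        rw [sform_add_right, sform_comm, hpat, sform_comm, F2.add_self_eq_zero]) hz
  obtain ⟨g', hg', hfix, hg'x⟩ := LinearMap.BilinForm.exists_isOrthogonal_eq_on_and_apply_eq
    symplecticForm_nondegenerate symplecticForm_isAlt ((mem_span_iff_of_apply_eq hgv).not.2 hx)
    hy fun z hz => F2.eq_of_add_eq_zero (by rw [← map_add]; exact hW z hz)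
  exact IsometryRel.trans ⟨g, hg, ⟨π, hgv⟩, rfl⟩
    ⟨g', hg', ⟨1, fun k => hfix _ (Submodule.subset_span ⟨k, rfl⟩)⟩, hg'x⟩

end SConfig

section Orbits

variable {ν : ℕ} {v : Fin 4 → Vec ν}

def SamePart (v : Fin 4 → Vec ν) (x y : Vec ν) : Prop :=
  (inS v x ∧ inS v y) ∨ (inT v x ∧ inT v y) ∨
    ((cnt v x = 0 ∧ ¬ inS v x ∧ ¬ inT v x) ∧ (cnt v y = 0 ∧ ¬ inS v y ∧ ¬ inT v y)) ∨
    (cnt v x = 2 ∧ cnt v y = 2) ∨ (cnt v x = 4 ∧ cnt v y = 4)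

lemma samePart_apply (hv : SConfig ν v) {σ : Equiv.Perm (Vtx ν)} (hσ : IsAut σ)
    (hS : ⇑σ '' {z : Vtx ν | inS v z.1} = {z | inS v z.1}) (x : Vtx ν) :
    SamePart v x.1 (σ x).1 := by
  unfold SamePart
  rw [inS_apply_iff hS, inT_apply_iff hv hσ hS, cnt_apply hv hσ hS]
  rcases hv.cnt_eq_zero_or_two_or_four x.1 with h | h | h <;> simp only [h] <;> tauto

lemma SConfig.isometryRel_of_samePart (hv : SConfig ν v) {x y : Vtx ν}
    (h : SamePart v x.1 y.1) : IsometryRel v x.1 y.1 := by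
  have notMem_span {z : Vtx ν} (hS : ¬ inS v z.1) (hT : ¬ inT v z.1) :
      z.1 ∉ Submodule.span F2 (Set.range v) := fun hz =>
    (hv.inS_or_inT_of_mem_span hz z.2).elim hS hT
  rcases h with ⟨⟨i, hx⟩, ⟨j, hy⟩⟩ | ⟨hx, hy⟩ | ⟨⟨hx0, hxS, hxT⟩, hy0, hyS, hyT⟩ | ⟨hx, hy⟩ |
    ⟨hx, hy⟩
  · rw [hx, hy, ← Finset.sum_singleton v i, ← Finset.sum_singleton v j]
    exact hv.isometryRel_sum rfl
  · obtain ⟨i, j, hij, hx⟩ := hv.inT_iff_exists_add.1 hx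
    obtain ⟨k, l, hkl, hy⟩ := hv.inT_iff_exists_add.1 hy
    rw [hx, hy, ← Finset.sum_pair hij, ← Finset.sum_pair hkl]
    exact hv.isometryRel_sum (by rw [Finset.card_pair hij, Finset.card_pair hkl])
  · exact hv.isometryRel_of_notMem_span (notMem_span hxS hxT) (notMem_span hyS hyT)
      (hx0.trans hy0.symm)
  all_goals
    exact hv.isometryRel_of_notMem_span (hv.notMem_span_of_cnt_ne_zero (by omega))
      (hv.notMem_span_of_cnt_ne_zero (by omega)) (hx.trans hy.symm)

end Orbits

theorem autS_orbits_general (ν : ℕ) (v : Fin 4 → Vec ν) (hv : SConfig ν v)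
    (x y : Vtx ν) :
    (∃ σ : Equiv.Perm (Vtx ν), IsAut σ ∧
        ⇑σ '' {z : Vtx ν | inS v z.1} = {z | inS v z.1} ∧ σ x = y) ↔
    ((inS v x.1 ∧ inS v y.1) ∨ (inT v x.1 ∧ inT v y.1) ∨
      ((cnt v x.1 = 0 ∧ ¬ inS v x.1 ∧ ¬ inT v x.1) ∧
        (cnt v y.1 = 0 ∧ ¬ inS v y.1 ∧ ¬ inT v y.1)) ∨
      (cnt v x.1 = 2 ∧ cnt v y.1 = 2) ∨ (cnt v x.1 = 4 ∧ cnt v y.1 = 4)) := by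
  refine ⟨?_, fun h => (hv.isometryRel_of_samePart h).exists_isAut⟩
  rintro ⟨σ, hσ, hS, rfl⟩
  exact samePart_apply hv hσ hS x

/-- The orbits of `Aut(X)_S` on the vertices of `Sp(2ν,2)` are exactly
`S`, `T`, `S_0 \ (S ∪ T)`, `S_2` and `S_4`: two vertices lie in a common orbit
iff they lie in a common one of these five sets. -/
theorem autS_orbits (ν : ℕ) (hν : 3 ≤ ν) (v : Fin 4 → Vec ν) (hv : SConfig ν v)
    (x y : Vtx ν) :
    (∃ σ : Equiv.Perm (Vtx ν), IsAut σ ∧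
        ⇑σ '' {z : Vtx ν | inS v z.1} = {z | inS v z.1} ∧ σ x = y) ↔
    ((inS v x.1 ∧ inS v y.1) ∨ (inT v x.1 ∧ inT v y.1) ∨
      ((cnt v x.1 = 0 ∧ ¬ inS v x.1 ∧ ¬ inT v x.1) ∧
        (cnt v y.1 = 0 ∧ ¬ inS v y.1 ∧ ¬ inT v y.1)) ∨
      (cnt v x.1 = 2 ∧ cnt v y.1 = 2) ∨ (cnt v x.1 = 4 ∧ cnt v y.1 = 4)) :=
  autS_orbits_general ν v hv x y
end
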